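/- The Dyck language of balanced parenthesis strings over the two-letter alphabet {[, ]} (all words w such that every prefix of w contains at least as many ['s as ]'s and w contains equally many ['s and ]'s) is not counting-regular: its counting function, which equals the n-th Catalan number at length 2n and 0 at odd lengths, is not the counting function of any regular language. -/

import Mathlib

/-- The counting function of a language: the number of words of length `n`. -/
noncomputable def countFn {α : Type*} (L : Set (List α)) (n : ℕ) : ℕ :=
  Set.ncard {w | w ∈ L ∧ w.length = n}

/-- A language is regular if it is accepted by a DFA with finitely many states. -/
def IsRegularLang {α : Type*} (L : Set (List α)) : Prop :=
  ∃ (σ : Type) (_ : Fintype σ) (M : DFA α σ), ∀ w, w ∈ M.accepts ↔ w ∈ L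

/-- A language is counting-regular if some regular language over a (possibly different)
finite alphabet has the same counting function. -/
def CountingRegular {α : Type*} (L : Set (List α)) : Prop :=
  ∃ (β : Type) (_ : Fintype β) (L' : Set (List β)),
    IsRegularLang L' ∧ ∀ n, countFn L' n = countFn L n


/-- The Dyck language of balanced parenthesis strings over `{[, ]}` (here `[ = 0`, `] = 1`). -/
def Dyck : Set (List (Fin 2)) :=
  {w | (∀ p, p <+: w → p.count 1 ≤ p.count 0) ∧ w.count 0 = w.count 1}

/-!
Dyck words over `Fin 2` are Mathlib's `DyckWord`s, so there are `catalan n` of them of length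
`2 n` and none of odd length. Modulo 2 the terms `C i * C j` and `C j * C i` of Segner's recurrence
cancel, leaving `C (n + 1) ≡ C (n / 2)` for even `n` and `C (n + 1) ≡ 0` for odd `n`; hence
`catalan n` is odd iff `n + 1` is a power of two, and the Dyck counting function is odd exactly
at the lengths `n` with `n + 2` a power of two, which is not an eventually periodic pattern.
For a DFA, the vector of the numbers of accepted words of length `n` from each state obeys a
linear recurrence, so modulo 2 it lives in a finite set and is eventually periodic; hence so is
the parity of the counting function of every regular language.
-/

open Finset

theorem Finset.Nat.sum_antidiagonal_mul_self_of_charTwo {R : Type*} [CommSemiring R] [CharP R 2]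
    (f : ℕ → R) (n : ℕ) :
    ∑ ij ∈ antidiagonal n, f ij.1 * f ij.2 = if Even n then f (n / 2) ^ 2 else 0 := by
  have pair : ∀ ij : ℕ × ℕ, f ij.1 * f ij.2 + f ij.swap.1 * f ij.swap.2 = 0 := fun ij => by
    rw [Prod.fst_swap, Prod.snd_swap, mul_comm (f ij.2), CharTwo.add_self_eq_zero]
  split_ifs with hn
  · obtain ⟨k, rfl⟩ := hn
    have hkk : (k, k) ∈ antidiagonal (k + k) := HasAntidiagonal.mem_antidiagonal.mpr rfl
    rw [← add_sum_erase _ _ hkk, show (k + k) / 2 = k by omega, sq,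
      sum_involution (fun ij _ => ij.swap) (fun ij _ => pair ij) ?_ ?_ (fun _ _ => rfl), add_zero]
    · rintro ⟨i, j⟩ hij - h
      simp only [mem_erase, HasAntidiagonal.mem_antidiagonal, ne_eq, Prod.swap_prod_mk,
        Prod.mk.injEq] at hij h
      omega
    · rintro ⟨i, j⟩ hij
      simp only [mem_erase, HasAntidiagonal.mem_antidiagonal, ne_eq, Prod.swap_prod_mk,
        Prod.mk.injEq] at hij ⊢
      omega
  · refine sum_involution (fun ij _ => ij.swap) (fun ij _ => pair ij) ?_ ?_ (fun _ _ => rfl)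
    · rintro ⟨i, j⟩ hij - h
      simp only [HasAntidiagonal.mem_antidiagonal, Prod.swap_prod_mk, Prod.mk.injEq] at hij h
      exact hn ⟨i, by omega⟩
    · rintro ⟨i, j⟩ hij
      simpa [add_comm] using hij

theorem catalan_succ_cast_zmod_two (n : ℕ) :
    (catalan (n + 1) : ZMod 2) = if Even n then (catalan (n / 2) : ZMod 2) else 0 := by
  rw [catalan_succ', Nat.cast_sum]
  simp only [Nat.cast_mul]
  rw [Finset.Nat.sum_antidiagonal_mul_self_of_charTwo (fun i => (catalan i : ZMod 2)),
    ZMod.pow_card]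

theorem exists_two_mul_eq_two_pow_iff (a : ℕ) : (∃ k, 2 * a = 2 ^ k) ↔ ∃ k, a = 2 ^ k := by
  refine ⟨fun ⟨k, hk⟩ => ?_, fun ⟨k, hk⟩ => ⟨k + 1, by rw [pow_succ]; omega⟩⟩
  rcases k with _ | k
  · omega
  · exact ⟨k, by rw [pow_succ] at hk; omega⟩

theorem Odd.ne_two_pow {a : ℕ} (ha : Odd a) (h1 : a ≠ 1) (k : ℕ) : a ≠ 2 ^ k := by
  rintro rfl
  rcases k with _ | k
  · exact h1 rfl
  · exact Nat.not_even_iff_odd.mpr ha (Nat.even_pow.mpr ⟨even_two, k.succ_ne_zero⟩)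

theorem odd_catalan_iff (n : ℕ) : Odd (catalan n) ↔ ∃ k, n + 1 = 2 ^ k := by
  induction n using Nat.strong_induction_on with
  | _ n ih =>
    rcases n with _ | m
    · simpa using ⟨0, rfl⟩
    rw [← ZMod.natCast_eq_one_iff_odd, catalan_succ_cast_zmod_two]
    split_ifs with hm
    · obtain ⟨j, rfl⟩ := hm
      rw [show (j + j) / 2 = j by omega, ZMod.natCast_eq_one_iff_odd, ih j (by omega),
        show j + j + 1 + 1 = 2 * (j + 1) by omega, exists_two_mul_eq_two_pow_iff]
    · have hodd : Odd (m + 1 + 1) := (Nat.not_even_iff_odd.mp hm).add_even even_two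
      simpa using fun k => hodd.ne_two_pow (by omega) k

open DyckStep

def finTwoEquivDyckStep : Fin 2 ≃ DyckStep where
  toFun i := if i = 0 then U else D
  invFun s := match s with | U => 0 | D => 1
  left_inv := by decide
  right_inv s := by cases s <;> rfl

theorem mem_dyck_iff_take (w : List (Fin 2)) :
    w ∈ Dyck ↔ (∀ i, (w.take i).count 1 ≤ (w.take i).count 0) ∧ w.count 0 = w.count 1 := by
  refine and_congr_left' ⟨fun h i => h _ (w.take_prefix i), fun h p hp => ?_⟩
  rw [List.prefix_iff_eq_take.mp hp]
  exact h _

theorem map_finTwoEquivDyckStep_mem_dyck_iff (w : List (Fin 2)) :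
    w ∈ Dyck ↔ (∀ i, ((w.map finTwoEquivDyckStep).take i).count D ≤
        ((w.map finTwoEquivDyckStep).take i).count U) ∧
      (w.map finTwoEquivDyckStep).count U = (w.map finTwoEquivDyckStep).count D := by
  have hcount (l : List (Fin 2)) (i : Fin 2) :
      (l.map finTwoEquivDyckStep).count (finTwoEquivDyckStep i) = l.count i :=
    List.count_map_of_injective l _ finTwoEquivDyckStep.injective i
  simp only [← List.map_take, show U = finTwoEquivDyckStep 0 from rfl,
    show D = finTwoEquivDyckStep 1 from rfl, hcount, mem_dyck_iff_take]

def dyckEquivDyckWord : Dyck ≃ DyckWord where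
  toFun w :=
    have hw := (map_finTwoEquivDyckStep_mem_dyck_iff w.1).mp w.2
    ⟨w.1.map finTwoEquivDyckStep, hw.2, hw.1⟩
  invFun p := ⟨p.toList.map finTwoEquivDyckStep.symm,
    (map_finTwoEquivDyckStep_mem_dyck_iff _).mpr <| by
      simpa [List.map_map] using ⟨p.count_D_le_count_U, p.count_U_eq_count_D⟩⟩
  left_inv w := Subtype.ext (by simp [List.map_map])
  right_inv p := DyckWord.ext (by simp [List.map_map])

theorem countFn_dyck (n : ℕ) :
    countFn Dyck n = Nat.card {p : DyckWord // p.toList.length = n} := by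
  rw [countFn, ← Nat.card_coe_set_eq]
  exact Nat.card_congr <|
    (Equiv.subtypeSubtypeEquivSubtypeInter (· ∈ Dyck) (·.length = n)).symm.trans
      (dyckEquivDyckWord.subtypeEquiv fun w => by simp [dyckEquivDyckWord])

theorem countFn_dyck_two_mul (n : ℕ) : countFn Dyck (2 * n) = catalan n := by
  rw [countFn_dyck, ← DyckWord.card_dyckWord_semilength_eq_catalan, ← Nat.card_eq_fintype_card]
  exact Nat.card_congr <| Equiv.subtypeEquivRight fun p => by
    rw [← p.two_mul_semilength_eq_length]; omega

theorem countFn_dyck_of_odd {n : ℕ} (hn : Odd n) : countFn Dyck n = 0 := by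
  rw [countFn_dyck, Nat.card_eq_zero]
  refine Or.inl ⟨fun ⟨p, hp⟩ => Nat.not_even_iff_odd.mpr hn ⟨p.semilength, ?_⟩⟩
  rw [← hp, ← p.two_mul_semilength_eq_length, two_mul]
def EventuallyPeriodic {X : Type*} (u : ℕ → X) : Prop :=
  ∃ N p, 0 < p ∧ ∀ n, N ≤ n → u (n + p) = u n

theorem EventuallyPeriodic.comp {X Y : Type*} {u : ℕ → X} (hu : EventuallyPeriodic u)
    (f : X → Y) : EventuallyPeriodic (f ∘ u) := by
  obtain ⟨N, p, hp, h⟩ := hu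
  exact ⟨N, p, hp, fun n hn => congrArg f (h n hn)⟩

theorem eventuallyPeriodic_of_succ_eq {X : Type*} [Finite X] {u : ℕ → X} (T : X → X)
    (hu : ∀ n, u (n + 1) = T (u n)) : EventuallyPeriodic u := by
  have shift (i j : ℕ) (hij : u i = u j) (k : ℕ) : u (i + k) = u (j + k) := by
    induction k with
    | zero => exact hij
    | succ k ih => rw [← add_assoc, ← add_assoc, hu, hu, ih]
  obtain ⟨i, j, hne, hij⟩ := Finite.exists_ne_map_eq_of_infinite u
  wlog hlt : i < j generalizing i j
  · exact this j i hne.symm hij.symm (by omega)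
  refine ⟨i, j - i, by omega, fun n hn => ?_⟩
  simpa [show j + (n - i) = n + (j - i) by omega, show i + (n - i) = n by omega] using
    (shift i j hij (n - i)).symm

theorem countFn_succ {α : Type*} [Fintype α] (L : Set (List α)) (n : ℕ) :
    countFn L (n + 1) = ∑ a, countFn {w | a :: w ∈ L} n := by
  have hfin (L' : Set (List α)) : Finite {w // w ∈ L' ∧ w.length = n} :=
    ((List.finite_length_eq α n).subset fun _ hw => hw.2).to_subtype
  have e : {w // w ∈ L ∧ w.length = n + 1} ≃ Σ a, {w // w ∈ {w | a :: w ∈ L} ∧ w.length = n} :=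
    { toFun := fun
        | ⟨a :: w, h⟩ => ⟨a, w, h.1, by simpa using h.2⟩
      invFun := fun ⟨a, w, h⟩ => ⟨a :: w, h.1, by simpa using h.2⟩
      left_inv := fun
        | ⟨a :: w, h⟩ => rfl
      right_inv := fun _ => rfl }
  simp only [countFn, ← Nat.card_coe_set_eq]
  exact (Nat.card_congr e).trans Nat.card_sigma

theorem DFA.eventuallyPeriodic_countFn_accepts {α σ : Type*} [Fintype α] [Finite σ]
    (M : DFA α σ) (m : ℕ) [NeZero m] :
    EventuallyPeriodic fun n => (countFn M.accepts n : ZMod m) := by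
  have hstep : EventuallyPeriodic fun n (q : σ) => (countFn (M.acceptsFrom q) n : ZMod m) :=
    eventuallyPeriodic_of_succ_eq (fun v q => ∑ a, v (M.step q a)) fun n => by
      funext q
      exact (congrArg Nat.cast (countFn_succ _ n)).trans (Nat.cast_sum _ _)
  exact hstep.comp (· M.start)
theorem not_eventuallyPeriodic_add_two_eq_pow_two :
    ¬ EventuallyPeriodic fun n => ∃ k, n + 2 = 2 ^ k := by
  rintro ⟨N, p, hp, h⟩
  -- A period `p < 2 ^ K` would put the power of two `2 ^ K + p` strictly between `2 ^ K` and
  -- `2 ^ (K + 1)`.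
  set K := N + p + 1
  have hK : K < 2 ^ K := K.lt_two_pow_self
  obtain ⟨k, hk⟩ := (eq_iff_iff.mp (h (2 ^ K - 2) (by omega))).mpr ⟨K, by omega⟩
  have hlo : K < k := (Nat.pow_lt_pow_iff_right (a := 2) (by norm_num)).mp (by omega)
  have hhi : k < K + 1 :=
    (Nat.pow_lt_pow_iff_right (a := 2) (by norm_num)).mp (by rw [pow_succ]; omega)
  omega

theorem countFn_dyck_cast_zmod_two_eq_one_iff (n : ℕ) :
    (countFn Dyck n : ZMod 2) = 1 ↔ ∃ k, n + 2 = 2 ^ k := by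
  rcases Nat.even_or_odd' n with ⟨j, rfl | rfl⟩
  · rw [countFn_dyck_two_mul, ZMod.natCast_eq_one_iff_odd, odd_catalan_iff,
      show 2 * j + 2 = 2 * (j + 1) by omega, exists_two_mul_eq_two_pow_iff]
  · have hodd : Odd (2 * j + 1 + 2) := ⟨j + 1, by omega⟩
    rw [countFn_dyck_of_odd ⟨j, rfl⟩]
    simpa using fun k => hodd.ne_two_pow (by omega) k

theorem not_eventuallyPeriodic_countFn_dyck_cast_zmod_two :
    ¬ EventuallyPeriodic fun n => (countFn Dyck n : ZMod 2) := fun h =>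
  not_eventuallyPeriodic_add_two_eq_pow_two <| by
    simpa only [Function.comp_def, countFn_dyck_cast_zmod_two_eq_one_iff] using h.comp (· = 1)

/-- The Dyck language is not counting-regular; its counting function is the `n`-th Catalan
number at length `2n` and `0` at odd lengths. -/
theorem stmt17 :
    (∀ n, countFn Dyck (2 * n) = catalan n) ∧ (∀ n, Odd n → countFn Dyck n = 0) ∧
    ¬ CountingRegular Dyck := by
  refine ⟨countFn_dyck_two_mul, fun _ => countFn_dyck_of_odd, ?_⟩
  rintro ⟨β, _, L, ⟨σ, _, M, hM⟩, hcount⟩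
  have hL : (M.accepts : Set (List β)) = L := Set.ext hM
  apply not_eventuallyPeriodic_countFn_dyck_cast_zmod_two
  simpa only [hL, hcount] using M.eventuallyPeriodic_countFn_accepts 2
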